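/- arXiv:2410.23223 — 3 statements merged into one kernel-verified Lean document; each statement's English description precedes it below -/
import Mathlib

section
/- Let A be a preference matrix, J(π₁,π₂) = π₁ᵀAπ₂ − 1/2, and π* a symmetric Nash equilibrium of J on the simplex Δⁿ. Fix τ > 0 and a reference distribution π_ref with full support. Suppose π ∈ Δⁿ satisfies π = argmax_{π₁∈Δⁿ} (π₁ᵀAπ − τ KL(π₁‖π_ref)), i.e., (π, π) is the symmetric Nash equilibrium of the τ-KL-regularized game with reference π_ref. Then KL(π*‖π) ≤ KL(π*‖π_ref) − KL(π‖π_ref). -/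
open Finset

lemma tangent_aux (r x a : ℝ) (hr : 0 < r) (hx : 0 < x) (ha : 0 ≤ a) :
    x * Real.log (x / r) - a * Real.log (a / r) ≤ (Real.log (x / r) + 1) * (x - a) := by
  rcases eq_or_lt_of_le ha with h0 | ha'
  · simp [← h0]; nlinarith
  · have h1 : Real.log (x / a) ≤ x / a - 1 := Real.log_le_sub_one_of_pos (by positivity)
    have h2 : a * Real.log (x / a) ≤ x - a := by
      have := mul_le_mul_of_nonneg_left h1 (le_of_lt ha')
      calc a * Real.log (x/a) ≤ a * (x/a - 1) := this
        _ = x - a := by field_simp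
    have h3 : Real.log (x / a) = Real.log (x / r) - Real.log (a / r) := by
      rw [Real.log_div hx.ne' ha'.ne', Real.log_div hx.ne' hr.ne', Real.log_div ha'.ne' hr.ne']
      ring
    nlinarith [h2, h3]


/-- one step of COMAL decreases KL to a symmetric Nash
equilibrium `π*` of the unregularized game. If `π` is the symmetric Nash
equilibrium of the `τ`-KL-regularized game with reference `π_ref`, i.e.
`π = argmax_{π₁∈Δ} (π₁ᵀAπ − τ·KL(π₁‖π_ref))`, then
`KL(π*‖π) ≤ KL(π*‖π_ref) − KL(π‖π_ref)`. -/
theorem regularized_step_decreases_KL_to_nash {n : ℕ}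
    (A : Fin n → Fin n → ℝ)
    (hA01 : ∀ i j, A i j ∈ Set.Icc (0:ℝ) 1)
    (hApref : ∀ i j, A i j + A j i = 1)
    (KL : (Fin n → ℝ) → (Fin n → ℝ) → ℝ)
    (hKL : ∀ p q, KL p q = ∑ y, p y * Real.log (p y / q y))
    (πstar : Fin n → ℝ) (hπstar : πstar ∈ stdSimplex ℝ (Fin n))
    (hNash : ∀ π ∈ stdSimplex ℝ (Fin n), ∑ i, ∑ j, π i * A i j * πstar j ≤ 1/2)
    (τ : ℝ) (hτ : 0 < τ)
    (πref : Fin n → ℝ) (hπref : πref ∈ stdSimplex ℝ (Fin n))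
    (hπref_pos : ∀ y, 0 < πref y)
    (π : Fin n → ℝ) (hπ : π ∈ stdSimplex ℝ (Fin n))
    (hargmax : ∀ π₁ ∈ stdSimplex ℝ (Fin n),
      (∑ i, ∑ j, π₁ i * A i j * π j) - τ * KL π₁ πref
        ≤ (∑ i, ∑ j, π i * A i j * π j) - τ * KL π πref) :
    KL πstar π ≤ KL πstar πref - KL π πref := by
  classical
  obtain ⟨hπ0, hπs⟩ := hπ
  obtain ⟨hπstar0, hπstars⟩ := hπstar
  -- basic game facts
  have pair : ∀ (p q : Fin n → ℝ), (∑ x, p x = 1) → (∑ x, q x = 1) →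
      (∑ i, ∑ j, p i * A i j * q j) + (∑ i, ∑ j, q i * A i j * p j) = 1 := by
    intro p q hp hq
    have h1 : (∑ i, ∑ j, q i * A i j * p j) = ∑ i, ∑ j, q j * A j i * p i :=
      Finset.sum_comm
    rw [h1, ← Finset.sum_add_distrib]
    simp only [← Finset.sum_add_distrib]
    calc (∑ i, ∑ j, (p i * A i j * q j + q j * A j i * p i))
        = ∑ i, ∑ j, p i * q j := Finset.sum_congr rfl fun i _ =>
            Finset.sum_congr rfl fun j _ => by linear_combination (p i * q j) * hApref i j
      _ = (∑ i, p i) * (∑ j, q j) := by rw [← Finset.sum_mul_sum]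
      _ = 1 := by rw [hp, hq]; ring
  have half : (∑ i, ∑ j, π i * A i j * π j) = 1/2 := by
    have := pair π π hπs hπs; linarith
  set c : ℝ := ∑ i, ∑ j, πstar i * A i j * π j with hc
  have hcge : 1/2 ≤ c := by
    have hN := hNash π ⟨hπ0, hπs⟩
    linarith [pair π πstar hπs hπstars]
  -- direction and path
  set d : Fin n → ℝ := fun y => πstar y - π y with hd
  set q : ℝ → Fin n → ℝ := fun t y => π y + t * d y with hq
  have hd_sum : ∑ y, d y = 0 := by
    simp only [hd, Finset.sum_sub_distrib, hπs, hπstars, sub_self]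
  have hq_nonneg : ∀ t ∈ Set.Icc (0:ℝ) 1, ∀ y, 0 ≤ q t y := by
    intro t ht y
    have := hπ0 y; have := hπstar0 y
    simp only [hq, hd]
    nlinarith [ht.1, ht.2]
  have hq_mem : ∀ t ∈ Set.Icc (0:ℝ) 1, q t ∈ stdSimplex ℝ (Fin n) := by
    intro t ht
    refine ⟨hq_nonneg t ht, ?_⟩
    simp only [hq, Finset.sum_add_distrib, ← Finset.mul_sum, hd_sum, hπs, mul_zero, add_zero]
  -- linear part along the path
  have lin_q : ∀ t : ℝ, (∑ i, ∑ j, q t i * A i j * π j) = 1/2 + t * (c - 1/2) := by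
    intro t
    have expand : ∀ i j, q t i * A i j * π j
        = π i * A i j * π j + t * (πstar i * A i j * π j) - t * (π i * A i j * π j) := by
      intro i j; simp only [hq, hd]; ring
    calc (∑ i, ∑ j, q t i * A i j * π j)
        = ∑ i, ∑ j, (π i * A i j * π j + t * (πstar i * A i j * π j)
            - t * (π i * A i j * π j)) := Finset.sum_congr rfl fun i _ =>
              Finset.sum_congr rfl fun j _ => expand i j
      _ = (∑ i, ∑ j, π i * A i j * π j) + t * c - t * (∑ i, ∑ j, π i * A i j * π j) := by
          simp only [Finset.sum_add_distrib, Finset.sum_sub_distrib, ← Finset.mul_sum, hc]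
      _ = 1/2 + t * (c - 1/2) := by rw [half]; ring
  -- the key inequality: G t ≥ 0 for t ∈ (0,1)
  set g : Fin n → ℝ → ℝ := fun y t => d y * Real.log (q t y / πref y) with hg
  set G : ℝ → ℝ := fun t => ∑ y, g y t with hG
  have key : ∀ t ∈ Set.Ioo (0:ℝ) 1, 0 ≤ G t := by
    intro t ht
    have htIcc : t ∈ Set.Icc (0:ℝ) 1 := ⟨ht.1.le, ht.2.le⟩
    have h1 := hargmax (q t) (hq_mem t htIcc)
    rw [lin_q t, half] at h1
    have h2 : 0 ≤ KL (q t) πref - KL π πref := by nlinarith [ht.1, hcge, hτ]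
    have h3 : KL (q t) πref - KL π πref ≤ t * G t := by
      rw [hKL, hKL, ← Finset.sum_sub_distrib]
      have percoord : ∀ y, q t y * Real.log (q t y / πref y) - π y * Real.log (π y / πref y)
          ≤ (Real.log (q t y / πref y) + 1) * (t * d y) := by
        intro y
        rcases eq_or_lt_of_le (hq_nonneg t htIcc y) with h0 | hpos
        · -- q t y = 0 forces π y = 0 and πstar y = 0
          have he : (1 - t) * π y + t * πstar y = 0 := by
            have h0' := h0.symm
            simp only [hq, hd] at h0'
            linarith
          have hπy : π y = 0 ∧ πstar y = 0 := by
            constructor <;> nlinarith [hπ0 y, hπstar0 y, ht.1, ht.2,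
              mul_nonneg (by linarith [ht.2] : (0:ℝ) ≤ 1 - t) (hπ0 y),
              mul_nonneg ht.1.le (hπstar0 y)]
          simp [hq, hd, hπy.1, hπy.2]
        · have := tangent_aux (πref y) (q t y) (π y) (hπref_pos y) hpos (hπ0 y)
          have hdiff : q t y - π y = t * d y := by simp [hq]
          rw [hdiff] at this
          exact this
      calc (∑ y, (q t y * Real.log (q t y / πref y) - π y * Real.log (π y / πref y)))
          ≤ ∑ y, (Real.log (q t y / πref y) + 1) * (t * d y) :=
            Finset.sum_le_sum fun y _ => percoord y
        _ = t * G t + t * ∑ y, d y := by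
            rw [hG, Finset.mul_sum, Finset.mul_sum, ← Finset.sum_add_distrib]
            exact Finset.sum_congr rfl fun y _ => by simp only [hg]; ring
        _ = t * G t := by rw [hd_sum]; ring
    nlinarith [ht.1]

  -- positivity of π on the support of πstar
  have hpos : ∀ y, 0 < πstar y → 0 < π y := by
    intro y₀ hy₀star
    by_contra hy₀
    push_neg at hy₀
    have hy0 : π y₀ = 0 := le_antisymm hy₀ (hπ0 y₀)
    have hdy0 : d y₀ = πstar y₀ := by simp [hd, hy0]
    -- g y₀ tends to -∞ as t → 0⁺
    have htend0 : Filter.Tendsto (g y₀) (nhdsWithin 0 (Set.Ioi 0)) Filter.atBot := by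
      have h1 : Filter.Tendsto (fun t : ℝ => q t y₀ / πref y₀)
          (nhdsWithin 0 (Set.Ioi 0)) (nhdsWithin 0 (Set.Ioi 0)) := by
        rw [tendsto_nhdsWithin_iff]
        constructor
        · have hc : Continuous (fun t : ℝ => q t y₀ / πref y₀) := by
            simp only [hq]; fun_prop
          have h := hc.tendsto 0
          have hval : q (0:ℝ) y₀ / πref y₀ = 0 := by simp [hq, hy0]
          rw [hval] at h
          exact h.mono_left nhdsWithin_le_nhds
        · filter_upwards [eventually_mem_nhdsWithin] with t (ht : t ∈ Set.Ioi 0)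
          have : q t y₀ = t * πstar y₀ := by simp [hq, hdy0, hy0]
          rw [Set.mem_Ioi, this]
          exact div_pos (mul_pos ht hy₀star) (hπref_pos y₀)
      have h2 := Real.tendsto_log_nhdsGT_zero.comp h1
      have h3 : (fun t : ℝ => Real.log (q t y₀ / πref y₀))
          = Real.log ∘ (fun t : ℝ => q t y₀ / πref y₀) := rfl
      have h4 : Filter.Tendsto (fun t : ℝ => d y₀ * Real.log (q t y₀ / πref y₀))
          (nhdsWithin 0 (Set.Ioi 0)) Filter.atBot := by
        apply Filter.Tendsto.const_mul_atBot (by rw [hdy0]; exact hy₀star)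
        rw [h3]; exact h2
      exact h4
    -- each other coordinate is eventually bounded above
    have hbd : ∀ y : Fin n, ∃ K : ℝ, ∀ᶠ t in nhdsWithin 0 (Set.Ioi 0), g y t ≤ K := by
      intro y
      rcases eq_or_lt_of_le (hπ0 y) with h0 | hp
      · rcases eq_or_lt_of_le (hπstar0 y) with hs0 | hs
        · exact ⟨0, Filter.Eventually.of_forall fun t => by
            simp [hg, hd, ← h0, ← hs0]⟩
        · refine ⟨0, ?_⟩
          have hmem : Set.Ioo (0:ℝ) (πref y / πstar y) ∈ nhdsWithin 0 (Set.Ioi 0) :=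
            Ioo_mem_nhdsGT_of_mem ⟨le_refl 0, div_pos (hπref_pos y) hs⟩
          filter_upwards [hmem] with t ht
          have hq' : q t y = t * πstar y := by simp [hq, hd, ← h0]
          have h1 : q t y / πref y ≤ 1 := by
            rw [hq', div_le_one (hπref_pos y)]
            have := ht.2
            rw [lt_div_iff₀ hs] at this
            linarith [mul_pos ht.1 hs]
          have h2 : Real.log (q t y / πref y) ≤ 0 := by
            apply Real.log_nonpos _ h1
            rw [hq']
            exact div_nonneg (mul_nonneg ht.1.le (hπstar0 y)) (hπref_pos y).le
          have hdy : d y = πstar y := by simp [hd, ← h0]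
          simp only [hg, hdy]
          exact mul_nonpos_of_nonneg_of_nonpos (hπstar0 y) h2
      · have hcont : Filter.Tendsto (g y) (nhdsWithin 0 (Set.Ioi 0))
            (nhds (d y * Real.log (π y / πref y))) := by
          have hc : ContinuousAt (fun t : ℝ => d y * Real.log ((π y + t * d y) / πref y)) 0 := by
            apply ContinuousAt.mul continuousAt_const
            apply ContinuousAt.comp (Real.continuousAt_log ?_) ?_
            · simp only [zero_mul, add_zero]
              exact (div_pos hp (hπref_pos y)).ne'
            · fun_prop
          have h := hc.tendsto.mono_left (nhdsWithin_le_nhds (s := Set.Ioi 0))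
          simp only [zero_mul, add_zero] at h
          exact h
        exact ⟨d y * Real.log (π y / πref y) + 1, hcont.eventually
          (eventually_le_nhds (lt_add_one _))⟩
    choose K hK using hbd
    have hRest : ∀ᶠ t in nhdsWithin 0 (Set.Ioi 0),
        ∑ y ∈ Finset.univ.erase y₀, g y t ≤ ∑ y ∈ Finset.univ.erase y₀, K y := by
      have hall : ∀ᶠ t in nhdsWithin 0 (Set.Ioi 0), ∀ y ∈ Finset.univ.erase y₀, g y t ≤ K y :=
        (Filter.eventually_all_finset _).mpr fun y _ => hK y
      filter_upwards [hall] with t ht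
      exact Finset.sum_le_sum ht
    have hGbot : Filter.Tendsto (fun t => g y₀ t + ∑ y ∈ Finset.univ.erase y₀, K y)
        (nhdsWithin 0 (Set.Ioi 0)) Filter.atBot :=
      Filter.tendsto_atBot_add_const_right _ _ htend0
    have hGevneg : ∀ᶠ t in nhdsWithin 0 (Set.Ioi 0), G t < 0 := by
      filter_upwards [hGbot.eventually (Filter.eventually_lt_atBot 0), hRest] with t h1 h2
      have hsplit : G t = g y₀ t + ∑ y ∈ Finset.univ.erase y₀, g y t := by
        rw [hG]
        exact (Finset.add_sum_erase _ _ (Finset.mem_univ y₀)).symm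
      linarith
    have hGevpos : ∀ᶠ t in nhdsWithin 0 (Set.Ioi 0), 0 ≤ G t := by
      filter_upwards [Ioo_mem_nhdsGT_of_mem ⟨le_refl (0:ℝ), one_pos⟩] with t ht
      exact key t ht
    obtain ⟨t, h1, h2⟩ := (hGevneg.and hGevpos).exists
    linarith
  -- take the limit t → 0⁺ of G
  set L : ℝ := ∑ y, d y * Real.log (π y / πref y) with hL
  have hGlim : Filter.Tendsto G (nhdsWithin 0 (Set.Ioi 0)) (nhds L) := by
    rw [hG, hL]
    apply tendsto_finset_sum
    intro y _
    rcases eq_or_lt_of_le (hπ0 y) with h0 | hp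
    · have hs0 : πstar y = 0 := by
        by_contra hs
        have := hpos y (lt_of_le_of_ne (hπstar0 y) (Ne.symm hs))
        rw [← h0] at this
        exact lt_irrefl _ this
      have hdy : d y = 0 := by simp [hd, ← h0, hs0]
      simp only [hg, hdy, zero_mul]
      exact tendsto_const_nhds
    · have hc : ContinuousAt (fun t : ℝ => d y * Real.log ((π y + t * d y) / πref y)) 0 := by
        apply ContinuousAt.mul continuousAt_const
        apply ContinuousAt.comp (Real.continuousAt_log ?_) ?_
        · simp only [zero_mul, add_zero]
          exact (div_pos hp (hπref_pos y)).ne'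
        · fun_prop
      have h := hc.tendsto.mono_left (nhdsWithin_le_nhds (s := Set.Ioi 0))
      simp only [zero_mul, add_zero] at h
      exact h
  have hL0 : 0 ≤ L := by
    refine ge_of_tendsto hGlim ?_
    filter_upwards [Ioo_mem_nhdsGT_of_mem ⟨le_refl (0:ℝ), one_pos⟩] with t ht
    exact key t ht
  -- final identity
  have hfin : KL πstar πref - KL πstar π - KL π πref = L := by
    rw [hKL, hKL, hKL, hL, ← Finset.sum_sub_distrib, ← Finset.sum_sub_distrib]
    apply Finset.sum_congr rfl
    intro y _
    rcases eq_or_lt_of_le (hπstar0 y) with hs0 | hs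
    · simp only [hd, ← hs0]
      ring
    · have hp := hpos y hs
      rw [Real.log_div hs.ne' (hπref_pos y).ne', Real.log_div hs.ne' hp.ne',
        Real.log_div hp.ne' (hπref_pos y).ne']
      simp only [hd]
      ring
  linarith
end

section
/- Let A be a preference matrix, π_ref a full-support distribution, τ > 0, and let μ* be the unique Nash equilibrium of the τ-KL-regularized game J_τ(π₁,π₂,π_ref) = π₁ᵀAπ₂ − 1/2 − τKL(π₁‖π_ref) + τKL(π₂‖π_ref). Consider the mirror descent iterates μ^{k+1} = Prox(μ^k, η F(μ^k)) where F(μ) = Aμ − τ(log(μ/π_ref) + 1) and Prox uses KL divergence. If 0 < η ≤ τ/(τ² + 1/2), then for every k ≥ 1, KL(μ*‖μ^{k+1}) ≤ (1 − ητ/2)·KL(μ*‖μ^k). -/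
/-!
Write `s = μ*`, `q = μᵏ`, `r = μᵏ⁺¹`. The prox step and the equilibrium condition both maximise a
linear function minus a KL divergence, so by the Gibbs variational principle `r ∝ q · exp (η F q)`
and `F s` is constant. The three-point identity for KL then gives
`KL(s‖r) = (1-ητ)KL(s‖q) - (1-ητ)KL(r‖q) - ητ KL(r‖s) + η ⟨r - q, A (q - s)⟩`,
the quadratic form `x ↦ ⟨x, A x⟩` vanishing on sum-zero vectors because `A + Aᵀ = 𝟙𝟙ᵀ`.
The cross term is at most `‖r - q‖₁ ‖q - s‖₁ / 2`, and Pinsker's inequality with AM-GM absorbs it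
into `(ητ/2) KL(s‖q) + (1-ητ) KL(r‖q)` precisely when `η ≤ τ / (τ² + 1/2)`.
-/

open Finset Matrix

section

open Real InformationTheory Set

theorem three_mul_sq_div_le_klFun {t : ℝ} (ht : 0 < t) :
    3 * (t - 1) ^ 2 / (2 * (t + 2)) ≤ klFun t := by
  -- `3(t-1)²/(2(t+2)) = 3(t-4)/2 + 27/(2(t+2))`; the difference `h` is convex since
  -- `h'' t = 1/t - 27/(t+2)³ ≥ 0` by AM-GM, and `h 1 = h' 1 = 0`.
  set h : ℝ → ℝ := fun x => klFun x - (3 / 2 * (x - 4) + 27 / 2 * (x + 2)⁻¹)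
  set h' : ℝ → ℝ := fun x => log x - 3 / 2 + 27 / 2 * ((x + 2) ^ 2)⁻¹
  have hderiv : ∀ x ∈ Ioi (0 : ℝ), HasDerivAt h (h' x) x := fun x hx => by
    have hx2 : x + 2 ≠ 0 := by linarith [mem_Ioi.mp hx]
    refine ((hasDerivAt_klFun (ne_of_gt hx)).sub
      ((((hasDerivAt_id x).sub_const 4).const_mul (3 / 2)).add
        ((((hasDerivAt_id x).add_const 2).inv hx2).const_mul (27 / 2)))).congr_deriv ?_
    simp only [h', id]
    field_simp
    ring
  have hderiv2 : ∀ x ∈ Ioi (0 : ℝ), HasDerivAt h' (x⁻¹ - 27 * ((x + 2) ^ 3)⁻¹) x := fun x hx => by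
    have hx2 : x + 2 ≠ 0 := by linarith [mem_Ioi.mp hx]
    refine (((hasDerivAt_log (ne_of_gt hx)).sub_const (3 / 2)).add
      ((((hasDerivAt_id x).add_const 2).fun_pow 2).inv (pow_ne_zero 2 hx2)
        |>.const_mul (27 / 2))).congr_deriv ?_
    simp only [id]
    field_simp
    ring
  have hconvex : ConvexOn ℝ (Ioi 0) h := by
    refine convexOn_of_hasDerivWithinAt2_nonneg (f' := h')
      (f'' := fun x => x⁻¹ - 27 * ((x + 2) ^ 3)⁻¹) (convex_Ioi 0)
      (fun x hx => (hderiv x hx).continuousAt.continuousWithinAt) ?_ ?_ ?_ <;>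
      rw [interior_Ioi]
    · exact fun x hx => (hderiv x hx).hasDerivWithinAt
    · exact fun x hx => (hderiv2 x hx).hasDerivWithinAt
    · intro x (hx : 0 < x)
      have : 27 / (x + 2) ^ 3 ≤ 1 / x := by
        rw [div_le_div_iff₀ (by positivity) hx]
        nlinarith [sq_nonneg (x - 1)]
      simpa [div_eq_mul_inv] using sub_nonneg.2 this
  have hmin : IsMinOn h (Ioi 0) 1 := by
    refine hconvex.isMinOn_of_rightDeriv_eq_zero (by simp) ?_
    rw [((hderiv 1 (by simp)).hasDerivWithinAt).derivWithin (uniqueDiffWithinAt_Ioi 1)]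
    norm_num [h']
  have key : h 1 ≤ h t := hmin (mem_Ioi.mpr ht)
  have hdecomp : 3 * (t - 1) ^ 2 / (2 * (t + 2)) = 3 / 2 * (t - 4) + 27 / 2 * (t + 2)⁻¹ := by
    field_simp; ring
  norm_num [h, klFun_one] at key
  linarith

variable {ι : Type*} [Fintype ι]

noncomputable def kl (p q : ι → ℝ) : ℝ := ∑ y, p y * log (p y / q y)

theorem sq_sum_abs_sub_le_two_mul_kl {p q : ι → ℝ} (hp : ∀ y, 0 < p y) (hq : ∀ y, 0 < q y)
    (hp1 : ∑ y, p y = 1) (hq1 : ∑ y, q y = 1) :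
    (∑ y, |p y - q y|) ^ 2 ≤ 2 * kl p q := by
  have hpq : ∀ y, 0 < 2 * (p y + 2 * q y) / 3 := fun y => by linarith [hp y, hq y]
  have hweights : ∑ y, 2 * (p y + 2 * q y) / 3 = 2 := by
    simp only [← Finset.sum_div, ← Finset.mul_sum, Finset.sum_add_distrib, hp1, hq1]
    norm_num
  have hterm : ∀ y, |p y - q y| ^ 2 / (2 * (p y + 2 * q y) / 3)
      ≤ p y * log (p y / q y) + q y - p y := fun y => by
    have hqy := (hq y).ne'
    have hlhs : q y * (3 * (p y / q y - 1) ^ 2 / (2 * (p y / q y + 2)))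
        = |p y - q y| ^ 2 / (2 * (p y + 2 * q y) / 3) := by
      have := (hpq y).ne'
      rw [sq_abs]; field_simp
    have hrhs : q y * klFun (p y / q y) = p y * log (p y / q y) + q y - p y := by
      rw [klFun_apply]; field_simp
    rw [← hlhs, ← hrhs]
    exact mul_le_mul_of_nonneg_left (three_mul_sq_div_le_klFun (div_pos (hp y) (hq y))) (hq y).le
  calc (∑ y, |p y - q y|) ^ 2
      = 2 * ((∑ y, |p y - q y|) ^ 2 / ∑ y, 2 * (p y + 2 * q y) / 3) := by
        rw [hweights]; ring
    _ ≤ 2 * ∑ y, |p y - q y| ^ 2 / (2 * (p y + 2 * q y) / 3) := by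
        gcongr; exact Finset.sq_sum_div_le_sum_sq_div _ _ fun y _ => hpq y
    _ ≤ 2 * ∑ y, (p y * log (p y / q y) + q y - p y) := by gcongr with y; exact hterm y
    _ = 2 * kl p q := by
        rw [Finset.sum_sub_distrib, Finset.sum_add_distrib, hp1, hq1, kl]; ring

theorem kl_nonneg {p q : ι → ℝ} (hp : ∀ y, 0 < p y) (hq : ∀ y, 0 < q y)
    (hp1 : ∑ y, p y = 1) (hq1 : ∑ y, q y = 1) : 0 ≤ kl p q := by
  nlinarith [sq_sum_abs_sub_le_two_mul_kl hp hq hp1 hq1, sq_nonneg (∑ y, |p y - q y|)]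

theorem eq_of_kl_nonpos {p q : ι → ℝ} (hp : ∀ y, 0 < p y) (hq : ∀ y, 0 < q y)
    (hp1 : ∑ y, p y = 1) (hq1 : ∑ y, q y = 1) (h : kl p q ≤ 0) : p = q := by
  have hsq : (∑ y, |p y - q y|) ^ 2 = 0 :=
    le_antisymm (by linarith [sq_sum_abs_sub_le_two_mul_kl hp hq hp1 hq1]) (sq_nonneg _)
  have hzero := (Finset.sum_eq_zero_iff_of_nonneg fun y _ => abs_nonneg (p y - q y)).mp
    (pow_eq_zero_iff two_ne_zero |>.mp hsq)
  funext y
  exact sub_eq_zero.mp (abs_eq_zero.mp (hzero y (mem_univ y)))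

theorem kl_self (p : ι → ℝ) : kl p p = 0 :=
  Finset.sum_eq_zero fun y _ => by rcases eq_or_ne (p y) 0 with h | h <;> simp [h]

noncomputable def gibbs (w G : ι → ℝ) : ι → ℝ :=
  fun y => w y * exp (G y) / ∑ z, w z * exp (G z)

theorem log_gibbs_div {w : ι → ℝ} (G : ι → ℝ) (hw : ∀ y, 0 < w y) (y : ι) :
    log (gibbs w G y / w y) = G y - log (∑ z, w z * exp (G z)) := by
  have hZ : 0 < ∑ z, w z * exp (G z) :=
    Finset.sum_pos (fun z _ => mul_pos (hw z) (exp_pos _)) ⟨y, mem_univ y⟩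
  rw [gibbs, div_right_comm, mul_div_cancel_left₀ _ (hw y).ne', log_div (exp_pos _).ne' hZ.ne',
    log_exp]

theorem gibbs_pos {w : ι → ℝ} (G : ι → ℝ) (hw : ∀ y, 0 < w y) (y : ι) : 0 < gibbs w G y :=
  div_pos (mul_pos (hw y) (exp_pos _))
    (Finset.sum_pos (fun z _ => mul_pos (hw z) (exp_pos _)) ⟨y, mem_univ y⟩)

theorem sum_gibbs [Nonempty ι] {w : ι → ℝ} (G : ι → ℝ) (hw : ∀ y, 0 < w y) :
    ∑ y, gibbs w G y = 1 := by
  simp only [gibbs, ← Finset.sum_div]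
  exact div_self (Finset.sum_pos (fun z _ => mul_pos (hw z) (exp_pos _)) univ_nonempty).ne'

theorem sum_mul_sub_kl_eq {w G p : ι → ℝ} (hw : ∀ y, 0 < w y) (hp : ∀ y, 0 < p y)
    (hp1 : ∑ y, p y = 1) :
    ∑ y, G y * p y - kl p w = log (∑ z, w z * exp (G z)) - kl p (gibbs w G) := by
  have hterm : ∀ y, p y * log (p y / gibbs w G y)
      = p y * log (p y / w y) - G y * p y + log (∑ z, w z * exp (G z)) * p y := fun y => by
    rw [← div_div_div_cancel_right₀ (hw y).ne', log_div (div_pos (hp y) (hw y)).ne'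
      (div_pos (gibbs_pos G hw y) (hw y)).ne', log_gibbs_div G hw]
    ring
  simp only [kl, hterm, Finset.sum_add_distrib, Finset.sum_sub_distrib, ← Finset.mul_sum, hp1]
  ring

theorem exists_forall_sub_mul_log_div_eq {τ : ℝ} (hτ : 0 < τ) {w G r : ι → ℝ}
    (hw : ∀ y, 0 < w y) (hr : ∀ y, 0 < r y) (hr1 : ∑ y, r y = 1)
    (hmax : ∀ p ∈ stdSimplex ℝ ι, ∑ y, G y * p y - τ * kl p w ≤ ∑ y, G y * r y - τ * kl r w) :
    ∃ c, ∀ y, G y - τ * log (r y / w y) = c := by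
  have : Nonempty ι := by
    by_contra h
    simp [not_nonempty_iff.mp h] at hr1
  set G' : ι → ℝ := fun y => G y / τ
  set ν := gibbs w G'
  have hν : ∀ y, 0 < ν y := gibbs_pos G' hw
  have hν1 : ∑ y, ν y = 1 := sum_gibbs G' hw
  have hvar : ∀ p : ι → ℝ, (∀ y, 0 < p y) → ∑ y, p y = 1 →
      ∑ y, G y * p y - τ * kl p w = τ * (log (∑ z, w z * exp (G' z)) - kl p ν) := by
    intro p hp hp1
    rw [← sum_mul_sub_kl_eq hw hp hp1, mul_sub, Finset.mul_sum]
    simp only [G', ← mul_assoc, mul_div_cancel₀ _ hτ.ne']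
  have hrν : r = ν := by
    refine eq_of_kl_nonpos hr hν hr1 hν1 (nonpos_of_mul_nonpos_right ?_ hτ)
    have := hmax ν ⟨fun y => (hν y).le, hν1⟩
    rw [hvar ν hν hν1, hvar r hr hr1, kl_self ν] at this
    linarith
  refine ⟨τ * log (∑ z, w z * exp (G' z)), fun y => ?_⟩
  rw [hrν, log_gibbs_div G' hw, mul_sub, mul_div_cancel₀ _ hτ.ne']
  ring

theorem kl_add_kl_sub_kl {p q r : ι → ℝ} (hp : ∀ y, 0 < p y) (hq : ∀ y, 0 < q y)
    (hr : ∀ y, 0 < r y) :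
    kl p r + kl r q - kl p q = ∑ y, (r y - p y) * log (r y / q y) := by
  simp only [kl, ← Finset.sum_add_distrib, ← Finset.sum_sub_distrib]
  refine Finset.sum_congr rfl fun y _ => ?_
  rw [log_div (hp y).ne' (hr y).ne', log_div (hr y).ne' (hq y).ne', log_div (hp y).ne' (hq y).ne']
  ring

theorem dotProduct_mulVec_self_eq_zero {A : Matrix ι ι ℝ} (hA : ∀ i j, A i j + A j i = 1)
    {x : ι → ℝ} (hx : ∑ i, x i = 0) : x ⬝ᵥ (A *ᵥ x) = 0 := by
  have hsym : A + Aᵀ = Matrix.of fun _ _ => 1 := by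
    ext i j
    exact hA i j
  have hsum : x ⬝ᵥ (A *ᵥ x) + x ⬝ᵥ (Aᵀ *ᵥ x) = 0 := by
    rw [← dotProduct_add, ← add_mulVec, hsym]
    simp [dotProduct, mulVec, hx]
  rw [mulVec_transpose, dotProduct_comm x (x ᵥ* A), ← dotProduct_mulVec] at hsum
  linarith

theorem abs_mulVec_le {A : Matrix ι ι ℝ} (hA : ∀ i j, A i j ∈ Icc (0 : ℝ) 1) {x : ι → ℝ}
    (hx : ∑ j, x j = 0) (i : ι) : |(A *ᵥ x) i| ≤ (∑ j, |x j|) / 2 := by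
  -- centring `A` at `1/2` is free because `∑ x = 0`
  have hshift : (A *ᵥ x) i = ∑ j, (A i j - 1 / 2) * x j := by
    simp only [mulVec, dotProduct, sub_mul, Finset.sum_sub_distrib, ← Finset.mul_sum, hx, mul_zero,
      sub_zero]
  rw [hshift, Finset.sum_div]
  refine (Finset.abs_sum_le_sum_abs _ _).trans (Finset.sum_le_sum fun j _ => ?_)
  have hcentered : |A i j - 1 / 2| ≤ 1 / 2 :=
    abs_le.mpr ⟨by linarith [(hA i j).1], by linarith [(hA i j).2]⟩
  rw [abs_mul]
  linarith [mul_le_mul_of_nonneg_right hcentered (abs_nonneg (x j))]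

theorem dotProduct_mulVec_le {A : Matrix ι ι ℝ} (hA : ∀ i j, A i j ∈ Icc (0 : ℝ) 1) {x : ι → ℝ}
    (hx : ∑ j, x j = 0) (d : ι → ℝ) : d ⬝ᵥ (A *ᵥ x) ≤ (∑ i, |d i|) * (∑ j, |x j|) / 2 := by
  rw [mul_div_assoc, Finset.sum_mul]
  refine Finset.sum_le_sum fun i _ => ?_
  exact (le_abs_self _).trans ((abs_mul _ _).trans_le
    (mul_le_mul_of_nonneg_left (abs_mulVec_le hA hx i) (abs_nonneg _)))

theorem cross_term_le_of_step_size {τ η a b U X : ℝ} (hτ : 0 < τ) (hη : 0 < η)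
    (hηle : η ≤ τ / (τ ^ 2 + 1 / 2)) (hX : X ^ 2 ≤ 2 * a) (hU : U ^ 2 ≤ 2 * b) :
    η * (U * X / 2) ≤ η * τ / 2 * a + (1 - η * τ) * b := by
  have hητ : η * (τ ^ 2 + 1 / 2) ≤ τ := (le_div_iff₀ (by positivity)).mp hηle
  have hpos : 0 < 1 - η * τ := by nlinarith
  have ha : 0 ≤ a := by nlinarith [sq_nonneg X]
  have hcoef : η ^ 2 ≤ 2 * (1 - η * τ) * (η * τ) := by
    nlinarith [mul_le_mul_of_nonneg_left hητ hη.le]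
  refine le_of_mul_le_mul_left ?_ (by positivity : 0 < 8 * (1 - η * τ))
  nlinarith [sq_nonneg (η * X - 2 * (1 - η * τ) * U), mul_le_mul_of_nonneg_left hX (sq_nonneg η),
    mul_le_mul_of_nonneg_left hU (sq_nonneg (1 - η * τ)), mul_le_mul_of_nonneg_right hcoef ha]

theorem kl_le_of_mirror_step {A : Matrix ι ι ℝ} (hA : ∀ i j, A i j ∈ Icc (0 : ℝ) 1)
    (hAA : ∀ i j, A i j + A j i = 1) {τ η : ℝ} (hτ : 0 < τ) (hη : 0 < η)
    (hηle : η ≤ τ / (τ ^ 2 + 1 / 2)) {s q r : ι → ℝ} (hs : ∀ y, 0 < s y) (hq : ∀ y, 0 < q y)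
    (hr : ∀ y, 0 < r y) (hs1 : ∑ y, s y = 1) (hq1 : ∑ y, q y = 1) (hr1 : ∑ y, r y = 1) {C : ℝ}
    (hstep : ∀ y, log (r y / q y) = η * ((A *ᵥ (q - s)) y + τ * log (s y / q y)) - C) :
    kl s r ≤ (1 - η * τ / 2) * kl s q := by
  -- `hstep` is the Gibbs form of `r = Prox(q, η F q)` with the constant `F s` subtracted from `F q`
  have hrs : ∑ y, (r y - s y) = 0 := by rw [Finset.sum_sub_distrib, hr1, hs1, sub_self]
  have hqs : ∑ y, (q - s) y = 0 := by
    simp only [Pi.sub_apply, Finset.sum_sub_distrib, hq1, hs1, sub_self]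
  have hstep_sum : ∑ y, (r y - s y) * log (r y / q y)
      = η * ((r - s) ⬝ᵥ (A *ᵥ (q - s))) + η * τ * ∑ y, (r y - s y) * log (s y / q y) := by
    have hexpand : ∑ y, (r y - s y) * log (r y / q y)
        = η * ((r - s) ⬝ᵥ (A *ᵥ (q - s))) + η * τ * ∑ y, (r y - s y) * log (s y / q y)
          - C * ∑ y, (r y - s y) := by
      simp only [hstep, dotProduct, Pi.sub_apply, Finset.mul_sum, ← Finset.sum_add_distrib,
        ← Finset.sum_sub_distrib]
      exact Finset.sum_congr rfl fun y _ => by ring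
    rw [hexpand, hrs, mul_zero, sub_zero]
  have hlog_sum : ∑ y, (r y - s y) * log (s y / q y) = kl r q - kl r s - kl s q := by
    have hneg : ∑ y, (r y - s y) * log (s y / q y) = -∑ y, (s y - r y) * log (s y / q y) := by
      rw [← Finset.sum_neg_distrib]
      exact Finset.sum_congr rfl fun y _ => by ring
    linarith [kl_add_kl_sub_kl hr hq hs]
  have hbilin : (r - s) ⬝ᵥ (A *ᵥ (q - s))
      ≤ (∑ y, |r y - q y|) * (∑ y, |s y - q y|) / 2 := by
    have hsplit : r - s = (r - q) + (q - s) := by abel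
    rw [hsplit, add_dotProduct, dotProduct_mulVec_self_eq_zero hAA hqs, add_zero]
    refine (dotProduct_mulVec_le hA hqs (r - q)).trans_eq ?_
    simp only [Pi.sub_apply, abs_sub_comm (q _)]
  have hcross := cross_term_le_of_step_size hτ hη hηle
    (sq_sum_abs_sub_le_two_mul_kl hs hq hs1 hq1) (sq_sum_abs_sub_le_two_mul_kl hr hq hr1 hq1)
  have hthree := kl_add_kl_sub_kl hs hq hr
  have hkl_rs : 0 ≤ η * τ * kl r s := mul_nonneg (by positivity) (kl_nonneg hr hs hr1 hs1)
  rw [hlog_sum] at hstep_sum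
  nlinarith [mul_le_mul_of_nonneg_left hbilin hη.le]

end

theorem mirror_descent_linear_convergence_regularized_game_general {n : ℕ}
    (A : Fin n → Fin n → ℝ)
    (hA01 : ∀ i j, A i j ∈ Set.Icc (0:ℝ) 1)
    (hApref : ∀ i j, A i j + A j i = 1)
    (KL : (Fin n → ℝ) → (Fin n → ℝ) → ℝ)
    (hKL : ∀ p q, KL p q = ∑ y, p y * Real.log (p y / q y))
    (τ η : ℝ) (hτ : 0 < τ) (hη : 0 < η) (hηle : η ≤ τ / (τ^2 + 1/2))
    (πref : Fin n → ℝ)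
    (hπref_pos : ∀ y, 0 < πref y)
    -- F(μ) = Aμ − τ(log(μ/π_ref) + 1)
    (F : (Fin n → ℝ) → Fin n → ℝ)
    (hF : ∀ μ y, F μ y = (∑ j, A y j * μ j) - τ * (Real.log (μ y / πref y) + 1))
    -- μ* is a Nash equilibrium of the regularized game
    (μstar : Fin n → ℝ) (hμstar : μstar ∈ stdSimplex ℝ (Fin n))
    (hμstar_pos : ∀ y, 0 < μstar y)
    (hNashMax : ∀ π ∈ stdSimplex ℝ (Fin n),
      (∑ i, ∑ j, π i * A i j * μstar j) - τ * KL π πref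
        ≤ (∑ i, ∑ j, μstar i * A i j * μstar j) - τ * KL μstar πref)
    -- mirror descent iterates
    (μ : ℕ → Fin n → ℝ)
    (hμmem : ∀ k, μ k ∈ stdSimplex ℝ (Fin n))
    (hμpos : ∀ k y, 0 < μ k y)
    (hupdate : ∀ k ≥ 1, ∀ p ∈ stdSimplex ℝ (Fin n),
      (∑ y, η * F (μ k) y * p y) - KL p (μ k)
        ≤ (∑ y, η * F (μ k) y * μ (k+1) y) - KL (μ (k+1)) (μ k)) :
    ∀ k ≥ 1, KL μstar (μ (k+1)) ≤ (1 - η * τ / 2) * KL μstar (μ k) := by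
  obtain rfl : KL = kl := funext fun p => funext fun q => hKL p q
  intro k hk
  have hpayoff : ∀ p : Fin n → ℝ, ∑ i, ∑ j, p i * A i j * μstar j = ∑ i, (A *ᵥ μstar) i * p i :=
    fun p => by
      simp only [mulVec, dotProduct, Finset.sum_mul]
      exact Finset.sum_congr rfl fun i _ => Finset.sum_congr rfl fun j _ => by ring
  obtain ⟨c, hc⟩ := exists_forall_sub_mul_log_div_eq hτ hπref_pos hμstar_pos hμstar.2
    fun π hπ => by simpa only [hpayoff] using hNashMax π hπ
  obtain ⟨C, hC⟩ := exists_forall_sub_mul_log_div_eq (G := fun y => η * F (μ k) y) one_pos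
    (hμpos k) (hμpos (k + 1)) (hμmem (k + 1)).2 fun p hp => by
      simpa only [one_mul] using hupdate k hk p hp
  refine kl_le_of_mirror_step hA01 hApref hτ hη hηle hμstar_pos (hμpos k) (hμpos (k + 1)) hμstar.2
    (hμmem k).2 (hμmem (k + 1)).2 (C := C - η * (c - τ)) fun y => ?_
  have hCy := hC y
  have hcy := hc y
  rw [hF, Real.log_div (hμpos k y).ne' (hπref_pos y).ne'] at hCy
  rw [Real.log_div (hμstar_pos y).ne' (hπref_pos y).ne'] at hcy
  rw [Real.log_div (hμstar_pos y).ne' (hμpos k y).ne']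
  simp only [mulVec, dotProduct, Pi.sub_apply, mul_sub, Finset.sum_sub_distrib] at hcy ⊢
  linear_combination -hCy + η * hcy

/-- linear last-iterate convergence of entropic mirror descent on
the `τ`-KL-regularized preference game. If `μ*` is the (unique symmetric) Nash
equilibrium of `J_τ(π₁,π₂,π_ref) = π₁ᵀAπ₂ − 1/2 − τKL(π₁‖π_ref) + τKL(π₂‖π_ref)`,
the iterates satisfy `μ¹ = π_ref` and `μ^{k+1} = Prox(μ^k, η·F(μ^k))` with
`F(μ) = Aμ − τ(log(μ/π_ref) + 1)`, and `0 < η ≤ τ/(τ² + 1/2)`, then for all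
`k ≥ 1`, `KL(μ*‖μ^{k+1}) ≤ (1 − ητ/2)·KL(μ*‖μ^k)`. -/
theorem mirror_descent_linear_convergence_regularized_game {n : ℕ}
    (A : Fin n → Fin n → ℝ)
    (hA01 : ∀ i j, A i j ∈ Set.Icc (0:ℝ) 1)
    (hApref : ∀ i j, A i j + A j i = 1)
    (KL : (Fin n → ℝ) → (Fin n → ℝ) → ℝ)
    (hKL : ∀ p q, KL p q = ∑ y, p y * Real.log (p y / q y))
    (τ η : ℝ) (hτ : 0 < τ) (hη : 0 < η) (hηle : η ≤ τ / (τ^2 + 1/2))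
    (πref : Fin n → ℝ) (hπref : πref ∈ stdSimplex ℝ (Fin n))
    (hπref_pos : ∀ y, 0 < πref y)
    -- F(μ) = Aμ − τ(log(μ/π_ref) + 1)
    (F : (Fin n → ℝ) → Fin n → ℝ)
    (hF : ∀ μ y, F μ y = (∑ j, A y j * μ j) - τ * (Real.log (μ y / πref y) + 1))
    -- μ* is a Nash equilibrium of the regularized game
    (μstar : Fin n → ℝ) (hμstar : μstar ∈ stdSimplex ℝ (Fin n))
    (hμstar_pos : ∀ y, 0 < μstar y)
    (hNashMax : ∀ π ∈ stdSimplex ℝ (Fin n),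
      (∑ i, ∑ j, π i * A i j * μstar j) - τ * KL π πref
        ≤ (∑ i, ∑ j, μstar i * A i j * μstar j) - τ * KL μstar πref)
    (hNashMin : ∀ π ∈ stdSimplex ℝ (Fin n),
      (∑ i, ∑ j, μstar i * A i j * μstar j) + τ * KL μstar πref
        ≤ (∑ i, ∑ j, μstar i * A i j * π j) + τ * KL π πref)
    -- mirror descent iterates
    (μ : ℕ → Fin n → ℝ)
    (hμmem : ∀ k, μ k ∈ stdSimplex ℝ (Fin n))
    (hμpos : ∀ k y, 0 < μ k y)
    (hinit : μ 1 = πref)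
    (hupdate : ∀ k ≥ 1, ∀ p ∈ stdSimplex ℝ (Fin n),
      (∑ y, η * F (μ k) y * p y) - KL p (μ k)
        ≤ (∑ y, η * F (μ k) y * μ (k+1) y) - KL (μ (k+1)) (μ k)) :
    ∀ k ≥ 1, KL μstar (μ (k+1)) ≤ (1 - η * τ / 2) * KL μstar (μ k) :=
  mirror_descent_linear_convergence_regularized_game_general A hA01 hApref KL hKL τ η hτ hη hηle
    πref hπref_pos F hF μstar hμstar hμstar_pos hNashMax μ hμmem hμpos hupdate
end

section
/- Let A be a preference matrix and π̂ a full-support distribution that is a fixed point of the prox map: π̂ = Prox(π̂, (1/τ)·Aπ̂) for some τ > 0 (with entropic prox). Then π̂ is a symmetric Nash equilibrium of J(π₁,π₂) = π₁ᵀAπ₂ − 1/2, i.e., πᵀAπ̂ ≤ 1/2 for every distribution π. -/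
open Finset

/-- a full-support fixed point of the entropic prox map
`π̂ = Prox(π̂, (1/τ)·Aπ̂)` is a symmetric Nash equilibrium of the preference
game: `πᵀAπ̂ ≤ 1/2` for every distribution `π`. -/
theorem prox_fixed_point_is_nash {n : ℕ}
    (A : Fin n → Fin n → ℝ)
    (hA01 : ∀ i j, A i j ∈ Set.Icc (0:ℝ) 1)
    (hApref : ∀ i j, A i j + A j i = 1)
    (KL : (Fin n → ℝ) → (Fin n → ℝ) → ℝ)
    (hKL : ∀ p q, KL p q = ∑ y, p y * Real.log (p y / q y))
    (τ : ℝ) (hτ : 0 < τ)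
    (πhat : Fin n → ℝ) (hπhat : πhat ∈ stdSimplex ℝ (Fin n))
    (hπhat_pos : ∀ y, 0 < πhat y)
    -- π̂ = Prox(π̂, (1/τ)·Aπ̂): π̂ maximizes ⟨(1/τ)Aπ̂, ·⟩ − KL(·‖π̂) over the simplex
    (hfix : ∀ p ∈ stdSimplex ℝ (Fin n),
      (∑ y, (1/τ) * (∑ j, A y j * πhat j) * p y) - KL p πhat
        ≤ (∑ y, (1/τ) * (∑ j, A y j * πhat j) * πhat y) - KL πhat πhat) :
    ∀ π ∈ stdSimplex ℝ (Fin n), ∑ i, ∑ j, π i * A i j * πhat j ≤ 1/2 := by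
  have hsum1 : ∑ y, πhat y = 1 := hπhat.2
  have hKL0 : KL πhat πhat = 0 := by
    rw [hKL]
    apply Finset.sum_eq_zero
    intro y _
    rw [div_self (hπhat_pos y).ne', Real.log_one, mul_zero]
  have key : ∀ i j : Fin n, (∑ k, A i k * πhat k) ≤ ∑ k, A j k * πhat k := by
    intro i j
    rcases eq_or_ne i j with rfl | hij
    · exact le_refl _
    obtain ⟨Si, hSi⟩ : ∃ x, x = ∑ k, A i k * πhat k := ⟨_, rfl⟩
    obtain ⟨Sj, hSj⟩ : ∃ x, x = ∑ k, A j k * πhat k := ⟨_, rfl⟩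
    rw [← hSi, ← hSj]
    obtain ⟨C, hC⟩ : ∃ x, x = 1 / πhat i + 1 / πhat j := ⟨_, rfl⟩
    have hi := hπhat_pos i
    have hj := hπhat_pos j
    have hCpos : 0 < C := by rw [hC]; positivity
    have main : ∀ t : ℝ, 0 < t → t < πhat j → Si - Sj ≤ t * (τ * C) := by
      intro t ht htj
      obtain ⟨p, hp⟩ : ∃ p : Fin n → ℝ,
          p = fun y => if y = i then πhat i + t else if y = j then πhat j - t else πhat y :=
        ⟨_, rfl⟩
      have pi : p i = πhat i + t := by rw [hp]; simp
      have pj : p j = πhat j - t := by rw [hp]; simp [Ne.symm hij]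
      have pother : ∀ y, y ≠ i → y ≠ j → p y = πhat y := by
        intro y h1 h2; rw [hp]; simp [h1, h2]
      have hdecomp : ∀ y, p y = πhat y + ((if y = i then t else 0) + (if y = j then -t else 0)) := by
        intro y
        by_cases h1 : y = i
        · rw [h1, pi, if_pos rfl, if_neg hij]; ring
        · by_cases h2 : y = j
          · rw [h2, pj, if_neg (Ne.symm hij), if_pos rfl]; ring
          · rw [pother y h1 h2, if_neg h1, if_neg h2]; ring
      have hpsum : ∑ y, p y = 1 := by
        simp only [hdecomp, Finset.sum_add_distrib, Finset.sum_ite_eq', Finset.mem_univ,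
          if_true, hsum1]
        ring
      have hpmem : p ∈ stdSimplex ℝ (Fin n) := by
        refine ⟨fun y => ?_, hpsum⟩
        by_cases h1 : y = i
        · rw [h1, pi]; linarith
        · by_cases h2 : y = j
          · rw [h2, pj]; linarith
          · rw [pother y h1 h2]; exact (hπhat_pos y).le
      have hinner : ∑ y, (1/τ) * (∑ k, A y k * πhat k) * p y
          = (∑ y, (1/τ) * (∑ k, A y k * πhat k) * πhat y)
            + ((1/τ) * Si * t + (1/τ) * Sj * (-t)) := by
        simp only [hdecomp, mul_add, Finset.sum_add_distrib, mul_ite, mul_zero, mul_neg,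
          Finset.sum_ite_eq', Finset.mem_univ, if_true, hSi, hSj]
      have hKLp : KL p πhat
          = (πhat i + t) * Real.log ((πhat i + t) / πhat i)
            + (πhat j - t) * Real.log ((πhat j - t) / πhat j) := by
        rw [hKL]
        have hpt : ∀ y, p y * Real.log (p y / πhat y)
            = (if y = i then (πhat i + t) * Real.log ((πhat i + t) / πhat i) else 0)
              + (if y = j then (πhat j - t) * Real.log ((πhat j - t) / πhat j) else 0) := by
          intro y
          by_cases h1 : y = i
          · rw [h1, pi, if_pos rfl, if_neg hij]; ring
          · by_cases h2 : y = j
            · rw [h2, pj, if_neg (Ne.symm hij), if_pos rfl]; ring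
            · rw [pother y h1 h2, if_neg h1, if_neg h2,
                div_self (hπhat_pos y).ne', Real.log_one]; ring
        simp only [hpt, Finset.sum_add_distrib, Finset.sum_ite_eq', Finset.mem_univ, if_true]
      have hKLbound : KL p πhat ≤ t^2 * C := by
        rw [hKLp]
        have h1 : Real.log ((πhat i + t) / πhat i) ≤ (πhat i + t) / πhat i - 1 :=
          Real.log_le_sub_one_of_pos (by positivity)
        have h2 : Real.log ((πhat j - t) / πhat j) ≤ (πhat j - t) / πhat j - 1 :=
          Real.log_le_sub_one_of_pos (div_pos (by linarith) hj)
        have b1 : (πhat i + t) * Real.log ((πhat i + t) / πhat i)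
            ≤ (πhat i + t) * ((πhat i + t) / πhat i - 1) :=
          mul_le_mul_of_nonneg_left h1 (by linarith)
        have b2 : (πhat j - t) * Real.log ((πhat j - t) / πhat j)
            ≤ (πhat j - t) * ((πhat j - t) / πhat j - 1) :=
          mul_le_mul_of_nonneg_left h2 (by linarith)
        have e1 : (πhat i + t) * ((πhat i + t) / πhat i - 1) = t + t^2 / πhat i := by
          field_simp; ring
        have e2 : (πhat j - t) * ((πhat j - t) / πhat j - 1) = -t + t^2 / πhat j := by
          field_simp; ring
        have e3 : t^2 * C = t^2 / πhat i + t^2 / πhat j := by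
          rw [hC]; field_simp
        rw [e3]
        linarith [b1.trans_eq e1, b2.trans_eq e2]
      have hf := hfix p hpmem
      rw [hKL0, hinner] at hf
      have h3 : (1/τ) * Si * t + (1/τ) * Sj * (-t) ≤ t^2 * C := by linarith
      have hτne : τ ≠ 0 := hτ.ne'
      have h3' : t * (Si - Sj) ≤ t * (t * (τ * C)) := by
        have hmul := mul_le_mul_of_nonneg_left h3 hτ.le
        calc t * (Si - Sj) = τ * ((1/τ) * Si * t + (1/τ) * Sj * (-t)) := by
              field_simp; ring
          _ ≤ τ * (t^2 * C) := hmul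
          _ = t * (t * (τ * C)) := by ring
      exact le_of_mul_le_mul_left h3' ht
    have hle : Si - Sj ≤ 0 := by
      by_contra hpos
      push_neg at hpos
      have hτC : 0 < τ * C := by positivity
      obtain ⟨t, ht⟩ : ∃ x, x = min (πhat j / 2) ((Si - Sj) / (2 * (τ * C))) := ⟨_, rfl⟩
      have htpos : 0 < t := by
        rw [ht]; exact lt_min (by linarith) (by positivity)
      have htlt : t < πhat j := by
        rw [ht]; exact lt_of_le_of_lt (min_le_left _ _) (by linarith)
      have hm := main t htpos htlt
      have h6 : t ≤ (Si - Sj) / (2 * (τ * C)) := by rw [ht]; exact min_le_right _ _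
      have h7 : t * (τ * C) ≤ ((Si - Sj) / (2 * (τ * C))) * (τ * C) :=
        mul_le_mul_of_nonneg_right h6 hτC.le
      have h8 : ((Si - Sj) / (2 * (τ * C))) * (τ * C) = (Si - Sj) / 2 := by
        field_simp
      linarith
    linarith
  have hconst : ∀ i j : Fin n, (∑ k, A i k * πhat k) = ∑ k, A j k * πhat k :=
    fun i j => le_antisymm (key i j) (key j i)
  have half : ∑ k, πhat k * (∑ l, A k l * πhat l) = 1/2 := by
    have swap : ∑ k, πhat k * (∑ l, A k l * πhat l) = ∑ k, ∑ l, πhat k * A k l * πhat l := by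
      refine Finset.sum_congr rfl fun k _ => ?_
      rw [Finset.mul_sum]
      exact Finset.sum_congr rfl fun l _ => by ring
    have hT' : ∑ k, ∑ l, πhat k * A l k * πhat l = ∑ k, ∑ l, πhat k * A k l * πhat l := by
      rw [Finset.sum_comm]
      exact Finset.sum_congr rfl fun k _ => Finset.sum_congr rfl fun l _ => by ring
    have hTT : (∑ k, ∑ l, πhat k * A k l * πhat l) + (∑ k, ∑ l, πhat k * A l k * πhat l) = 1 := by
      rw [← Finset.sum_add_distrib]
      have hk : ∀ k ∈ univ, ((∑ l, πhat k * A k l * πhat l) + ∑ l, πhat k * A l k * πhat l)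
          = πhat k := by
        intro k _
        rw [← Finset.sum_add_distrib]
        have hl : ∀ l ∈ univ, πhat k * A k l * πhat l + πhat k * A l k * πhat l
            = πhat k * πhat l := by
          intro l _
          calc πhat k * A k l * πhat l + πhat k * A l k * πhat l
              = πhat k * πhat l * (A k l + A l k) := by ring
            _ = πhat k * πhat l := by rw [hApref k l, mul_one]
        rw [Finset.sum_congr rfl hl, ← Finset.mul_sum, hsum1, mul_one]
      rw [Finset.sum_congr rfl hk, hsum1]
    rw [swap]; rw [hT'] at hTT; linarith
  have hSval : ∀ i, (∑ k, A i k * πhat k) = 1/2 := by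
    intro i
    calc (∑ k, A i k * πhat k) = ∑ k, πhat k * (∑ l, A i l * πhat l) := by
          rw [← Finset.sum_mul, hsum1, one_mul]
      _ = ∑ k, πhat k * (∑ l, A k l * πhat l) :=
          Finset.sum_congr rfl fun k _ => by rw [hconst i k]
      _ = 1/2 := half
  intro π hπ
  have hrw : ∑ i, ∑ j, π i * A i j * πhat j = ∑ i, π i * (∑ k, A i k * πhat k) := by
    refine Finset.sum_congr rfl fun i _ => ?_
    rw [Finset.mul_sum]
    exact Finset.sum_congr rfl fun j _ => by ring
  rw [hrw]
  have hfin : ∑ i, π i * (∑ k, A i k * πhat k) = 1/2 := by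
    calc ∑ i, π i * (∑ k, A i k * πhat k) = ∑ i, π i * (1/2) :=
          Finset.sum_congr rfl fun i _ => by rw [hSval i]
      _ = (∑ i, π i) * (1/2) := by rw [← Finset.sum_mul]
      _ = 1/2 := by rw [hπ.2, one_mul]
  linarith
end
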